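/- For any 3×3 upper triangular matrix A = [[0,a12,a13],[0,a22,a23],[0,0,0]] of coefficients with a13 ≠ 0, the tensor r = Σ a_{ij} e_i ⊗ e_j is a solution of the D-equation r12 ∗ r13 = r13 ≺ r23 + r23 ≻ r12 in the dendriform algebra (H_0, ≺, ≻) with parameter λ = 0. -/
import Mathlib


open Finset

/-- Structure constants of `≺` on `H₀`: `e₁ ≺ e₃ = (1−λ) e₂`, others zero. -/
def cPrec (lam : ℂ) (i j k : Fin 3) : ℂ :=
  if i = 0 ∧ j = 2 ∧ k = 1 then 1 - lam else 0

/-- Structure constants of `≻` on `H₀`: `e₁ ≻ e₃ = λ e₂`, others zero. -/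
def cSucc (lam : ℂ) (i j k : Fin 3) : ℂ :=
  if i = 0 ∧ j = 2 ∧ k = 1 then lam else 0

/-- The `D`-equation `r₁₂ ∗ r₁₃ = r₁₃ ≺ r₂₃ + r₂₃ ≻ r₁₂` in components, for
`r = Σ rᵢⱼ eᵢ ⊗ eⱼ`, where `∗ = ≺ + ≻`:
`(r₁₂ ∗ r₁₃)ᵤᵥ𝓌 = Σᵢⱼ rᵢᵥ rⱼ𝓌 (c≺ + c≻) i j u`,
`(r₁₃ ≺ r₂₃)ᵤᵥ𝓌 = Σᵢⱼ rᵤᵢ rᵥⱼ c≺ i j w`,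
`(r₂₃ ≻ r₁₂)ᵤᵥ𝓌 = Σᵢⱼ rᵢ𝓌 rᵤⱼ c≻ i j v`. -/
def DEq (lam : ℂ) (r : Fin 3 → Fin 3 → ℂ) : Prop :=
  ∀ u v w : Fin 3,
    (∑ i, ∑ j, r i v * r j w * (cPrec lam i j u + cSucc lam i j u))
      = (∑ i, ∑ j, r u i * r v j * cPrec lam i j w)
        + (∑ i, ∑ j, r i w * r u j * cSucc lam i j v)

/-- For any coefficient matrix `[[0,a₁₂,a₁₃],[0,a₂₂,a₂₃],[0,0,0]]` with
`a₁₃ ≠ 0`, the corresponding tensor solves the `D`-equation in the dendriform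
algebra `(H₀, ≺, ≻)` with parameter `λ = 0`. -/
theorem Deq_solution_lambda_zero (a12 a13 a22 a23 : ℂ) (h : a13 ≠ 0) :
    DEq 0 (fun i j : Fin 3 =>
      if i = 0 ∧ j = 1 then a12 else if i = 0 ∧ j = 2 then a13
      else if i = 1 ∧ j = 1 then a22 else if i = 1 ∧ j = 2 then a23 else 0) := by
  intro u v w
  simp only [cPrec, cSucc, Fin.sum_univ_three]
  fin_cases u <;> fin_cases v <;> fin_cases w <;> simp <;> ring
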